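/- arXiv:2010.15345 — 2 statements merged into one kernel-verified Lean document; each statement's English description precedes it below -/
import Mathlib

section
/- (Corollary 2.4) Suppose k = 0 (so Υₙ = 1 for all n) and let f(z) = z + Σ_{n≥2} aₙ zⁿ belong to the class B_Σ(0, φ). Assume B₁²·(2C(δ,3) − C(δ,2)²) − (B₂−B₁)·C(δ,2)² ≠ 0. Then |a₂| ≤ B₁·√B₁ / √( |B₁²·(2C(δ,3) − C(δ,2)²) − (B₂−B₁)·C(δ,2)²| ) and |a₃| ≤ B₁/(2C(δ,3)) + ( B₁/C(δ,2) )². -/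
/-!
Let `D` be the image of `f` under the operator; for `k = 0` its Taylor coefficients are
`C(δ,n) aₙ`. Subordination provides a Schwarz function `u` with `z D'(z) = φ(u(z)) D(z)`, and
comparing Taylor coefficients up to order three gives
`C(δ,2) a₂ = B₁ c₁` and `2 C(δ,3) a₃ - C(δ,2)² a₂² = B₁ c₂ + B₂ c₁²`,
where `u(z) = c₁ z + c₂ z² + ⋯` satisfies `|c₂| ≤ 1 - |c₁|²` (Schwarz–Pick applied to `u(z)/z`).
The inverse `g` has coefficients `-a₂` and `2a₂² - a₃` and yields the same relations with a
second Schwarz function. The sum of the two second-order relations, with `c₁` eliminated through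
the first-order one, bounds `|a₂|`; their difference bounds `|a₃ - a₂²|`.
-/

open Complex

noncomputable section

/-- The open unit disk in ℂ. -/
def unitDisk : Set ℂ := Metric.ball 0 1

/-- Υₙ = (λ(α+β−1)(n−1))^k. -/
def Ups (lam al be : ℝ) (k n : ℕ) : ℝ := (lam * (al + be - 1) * ((n : ℝ) - 1)) ^ k

/-- C(δ,n) = Γ(n+δ)/(Γ(n)·Γ(δ+1)). -/
def Cdel (d : ℝ) (n : ℕ) : ℝ :=
  Real.Gamma ((n : ℝ) + d) / (Real.Gamma (n : ℝ) * Real.Gamma (d + 1))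

/-- The operator D applied to a function with Taylor coefficients `a`
(where `a 0 = 0`, `a 1 = 1`): (Df)(z) = z + Σ_{n≥2} Υₙ·C(δ,n)·aₙ zⁿ. -/
def Dop (lam al be d : ℝ) (k : ℕ) (a : ℕ → ℂ) : ℂ → ℂ := fun z =>
  z + ∑' n : ℕ, if 2 ≤ n then (Ups lam al be k n : ℂ) * (Cdel d n : ℂ) * a n * z ^ n else 0

/-- Subordination F ≺ G on the unit disk. -/
def Subord (F G : ℂ → ℂ) : Prop :=
  ∃ u : ℂ → ℂ, AnalyticOnNhd ℂ u unitDisk ∧ u 0 = 0 ∧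
    (∀ z ∈ unitDisk, ‖u z‖ < 1) ∧ ∀ z ∈ unitDisk, F z = G (u z)

/-- z ↦ (z·F′(z)/F(z))·((F(z)/z)^γ), with the value 1 at the origin
(principal-branch complex power). -/
def bazFun (g : ℝ) (F : ℂ → ℂ) : ℂ → ℂ := fun z =>
  if z = 0 then 1 else (z * deriv F z / F z) * ((F z / z) ^ (g : ℂ))

/-- `f` is analytic on the unit disk, normalized, with Taylor coefficients `a`
(`a 0 = 0`, `a 1 = 1`). -/
def IsInA (f : ℂ → ℂ) (a : ℕ → ℂ) : Prop :=
  AnalyticOnNhd ℂ f unitDisk ∧ a 0 = 0 ∧ a 1 = 1 ∧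
    ∀ z ∈ unitDisk, HasSum (fun n => a n * z ^ n) (f z)

/-- Membership of `f` (with coefficients `a`, and inverse `g` with coefficients `b`)
in the class B_Σ(γ, φ). -/
def MemB (lam al be d : ℝ) (k : ℕ) (g : ℝ) (φ : ℂ → ℂ)
    (f gf : ℂ → ℂ) (a b : ℕ → ℂ) : Prop :=
  IsInA f a ∧ Set.InjOn f unitDisk ∧
  IsInA gf b ∧ Set.InjOn gf unitDisk ∧
  (∀ w : ℂ, ‖w‖ < 1 / 4 → f (gf w) = w) ∧
  b 2 = -a 2 ∧ b 3 = 2 * a 2 ^ 2 - a 3 ∧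
  (∀ z ∈ unitDisk, z ≠ 0 → Dop lam al be d k a z ≠ 0) ∧
  (∀ z ∈ unitDisk, z ≠ 0 → Dop lam al be d k b z ≠ 0) ∧
  Subord (bazFun g (Dop lam al be d k a)) φ ∧
  Subord (bazFun g (Dop lam al be d k b)) φ


open Metric Filter Topology Set

lemma mem_unitDisk {z : ℂ} : z ∈ unitDisk ↔ ‖z‖ < 1 := mem_ball_zero_iff

lemma hasFPowerSeriesOnBall_ofScalars_of_hasSum {F : ℂ → ℂ} {c : ℕ → ℂ} {r : ℝ} (hr : 0 < r)
    (hF : ∀ z : ℂ, ‖z‖ < r → HasSum (fun n => c n * z ^ n) (F z)) :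
    HasFPowerSeriesOnBall F (FormalMultilinearSeries.ofScalars ℂ c) 0 (ENNReal.ofReal r) where
  r_le := by
    refine ENNReal.le_of_forall_pos_nnreal_lt fun s _ hs => ?_
    have hsr : (s : ℝ) < r := by
      rw [← ENNReal.ofReal_coe_nnreal] at hs
      exact (ENNReal.ofReal_lt_ofReal_iff hr).1 hs
    refine (FormalMultilinearSeries.ofScalars ℂ c).le_radius_of_tendsto (l := 0) ?_
    have := (hF (s : ℂ) (by simpa using hsr)).summable.tendsto_atTop_zero.norm
    simpa [FormalMultilinearSeries.ofScalars_norm] using this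
  r_pos := by simpa using hr
  hasSum {y} hy := by
    have hy' : ‖y‖ < r := by simpa [edist_dist] using hy
    simpa [FormalMultilinearSeries.ofScalars_apply_eq, mul_comm] using hF y hy'

lemma iteratedDeriv_eq_factorial_mul_of_hasSum {F : ℂ → ℂ} {c : ℕ → ℂ} {r : ℝ} (hr : 0 < r)
    (hF : ∀ z : ℂ, ‖z‖ < r → HasSum (fun n => c n * z ^ n) (F z)) (n : ℕ) :
    iteratedDeriv n F 0 = n.factorial * c n := by
  have hc := (hasFPowerSeriesOnBall_ofScalars_of_hasSum hr hF).hasFPowerSeriesAt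
  have hseries := hc.eq_formalMultilinearSeries hc.analyticAt.hasFPowerSeriesAt
  have := congrFun ((FormalMultilinearSeries.ofScalars_series_eq_iff (E := ℂ) c _).1 hseries) n
  rw [this, mul_div_cancel₀ _ (by exact_mod_cast n.factorial_ne_zero)]

section Cdel

variable {d : ℝ}

lemma Cdel_pos (hd : 0 ≤ d) {n : ℕ} (hn : 1 ≤ n) : 0 < Cdel d n := by
  have hn' : (0 : ℝ) < n := by exact_mod_cast hn
  exact div_pos (Real.Gamma_pos_of_pos (by linarith))
    (mul_pos (Real.Gamma_pos_of_pos hn') (Real.Gamma_pos_of_pos (by linarith)))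

lemma Cdel_one (hd : 0 ≤ d) : Cdel d 1 = 1 := by
  have : Real.Gamma (d + 1) ≠ 0 := (Real.Gamma_pos_of_pos (by linarith)).ne'
  simp [Cdel, add_comm (1 : ℝ) d, this]

lemma Cdel_succ (hd : 0 ≤ d) {n : ℕ} (hn : 1 ≤ n) :
    Cdel d (n + 1) = (n + d) / n * Cdel d n := by
  have hn' : (0 : ℝ) < n := by exact_mod_cast hn
  have h1 : Real.Gamma n ≠ 0 := (Real.Gamma_pos_of_pos hn').ne'
  have h2 : Real.Gamma (d + 1) ≠ 0 := (Real.Gamma_pos_of_pos (by linarith)).ne'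
  unfold Cdel
  push_cast
  rw [show (n : ℝ) + 1 + d = n + d + 1 by ring, Real.Gamma_add_one (by linarith),
    Real.Gamma_add_one hn'.ne']
  field_simp

lemma Cdel_le_pow (hd : 0 ≤ d) {n : ℕ} (hn : 1 ≤ n) : Cdel d n ≤ (1 + d) ^ n := by
  induction n, hn using Nat.le_induction with
  | base => rw [Cdel_one hd]; linarith
  | succ m hm ih =>
    have hm' : (1 : ℝ) ≤ m := by exact_mod_cast hm
    have hratio : (m + d) / m ≤ 1 + d := by
      rw [div_le_iff₀ (by linarith)]
      nlinarith
    rw [Cdel_succ hd hm, pow_succ']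
    exact mul_le_mul hratio ih (Cdel_pos hd hm).le (by linarith)

end Cdel

lemma norm_Cdel_mul_pow_le {d M : ℝ} (hd : 0 ≤ d) {a : ℕ → ℂ} (ha0 : a 0 = 0)
    (hM : ∀ n, ‖a n‖ * (1 / 2) ^ n ≤ M) (y : ℂ) (n : ℕ) :
    ‖(Cdel d n : ℂ) * a n * y ^ n‖ ≤ M * (2 * (1 + d) * ‖y‖) ^ n := by
  rcases Nat.eq_zero_or_pos n with rfl | hn
  · simpa [ha0] using (norm_nonneg _).trans (by simpa using hM 0)
  rw [norm_mul, norm_mul, Complex.norm_real, Real.norm_of_nonneg (Cdel_pos hd hn).le, norm_pow]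
  calc Cdel d n * ‖a n‖ * ‖y‖ ^ n ≤ (1 + d) ^ n * ‖a n‖ * ‖y‖ ^ n := by
        gcongr; exact Cdel_le_pow hd hn
    _ = ‖a n‖ * (1 / 2) ^ n * (2 * (1 + d) * ‖y‖) ^ n := by
        have h2 : ((1 : ℝ) / 2) ^ n * 2 ^ n = 1 := by rw [← mul_pow]; norm_num
        simp only [mul_pow]
        linear_combination (-(1 + d) ^ n * ‖a n‖ * ‖y‖ ^ n) * h2
    _ ≤ M * (2 * (1 + d) * ‖y‖) ^ n := by gcongr; exact hM n

-- With `k = 0` every `Υₙ` is `1`, and the leading `z` of `Dop` is the `n = 1` term since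
-- `Cdel d 1 = 1`.
lemma hasSum_Dop {lam al be d M : ℝ} (hd : 0 ≤ d) {a : ℕ → ℂ} (ha0 : a 0 = 0) (ha1 : a 1 = 1)
    (hM : ∀ n, ‖a n‖ * (1 / 2) ^ n ≤ M) {y : ℂ} (hy : ‖y‖ < (2 * (1 + d))⁻¹) :
    HasSum (fun n => (Cdel d n : ℂ) * a n * y ^ n) (Dop lam al be d 0 a y) := by
  have hq : 2 * (1 + d) * ‖y‖ < 1 := by
    rwa [← mul_one (2 * (1 + d))⁻¹, lt_inv_mul_iff₀ (by linarith)] at hy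
  have hsum : Summable fun n => (Cdel d n : ℂ) * a n * y ^ n :=
    .of_norm_bounded ((summable_geometric_of_lt_one (by positivity) hq).mul_left M)
      (norm_Cdel_mul_pow_le hd ha0 hM y)
  have htail : HasSum (fun n => if 2 ≤ n then (Cdel d n : ℂ) * a n * y ^ n else 0)
      (∑' n, if 2 ≤ n then (Ups lam al be 0 n : ℂ) * Cdel d n * a n * y ^ n else 0) := by
    simp only [Ups, pow_zero, Complex.ofReal_one, one_mul]
    refine (Summable.of_norm_bounded hsum.norm fun n => ?_).hasSum
    split_ifs <;> simp
    positivity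
  have hsplit : (fun n => (Cdel d n : ℂ) * a n * y ^ n) =
      fun n => (if n = 1 then y else 0) + if 2 ≤ n then (Cdel d n : ℂ) * a n * y ^ n else 0 := by
    funext n
    rcases n with _ | _ | n
    · simp [ha0]
    · simp [ha1, Cdel_one hd]
    · simp
  rw [hsplit]
  exact (hasSum_ite_eq 1 y).add htail

lemma exists_hasSum_Dop {lam al be d : ℝ} (hd : 0 ≤ d) {f : ℂ → ℂ} {a : ℕ → ℂ} (hf : IsInA f a) :
    ∃ r > 0, ∀ y : ℂ, ‖y‖ < r →
      HasSum (fun n => (Cdel d n : ℂ) * a n * y ^ n) (Dop lam al be d 0 a y) := by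
  obtain ⟨-, ha0, ha1, hsum⟩ := hf
  have hhalf : ((1 / 2 : ℝ) : ℂ) ∈ unitDisk := by rw [mem_unitDisk]; norm_num
  obtain ⟨M, hM⟩ := (hsum _ hhalf).summable.tendsto_atTop_zero.norm.bddAbove_range
  refine ⟨(2 * (1 + d))⁻¹, by positivity, fun y hy => hasSum_Dop hd ha0 ha1 (M := M) ?_ hy⟩
  intro n
  simpa using hM (Set.mem_range_self n)

lemma iteratedDeriv_leibniz_of_mul_deriv_eq {D P : ℂ → ℂ} (hD : AnalyticAt ℂ D 0)
    (hP : AnalyticAt ℂ P 0)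
    (heq : (fun z => z * deriv D z) =ᶠ[𝓝 0] fun z => P z * D z) (n : ℕ) :
    n * iteratedDeriv n D 0 = ∑ i ∈ Finset.range (n + 1),
      n.choose i * iteratedDeriv i P 0 * iteratedDeriv (n - i) D 0 := by
  rw [← iteratedDeriv_fun_mul hP.contDiffAt hD.contDiffAt, ← heq.iteratedDeriv_eq,
    iteratedDeriv_fun_mul (f := fun z => z) contDiffAt_id hD.deriv.contDiffAt]
  simp only [iteratedDeriv_fun_id_zero, mul_ite, ite_mul, mul_one, mul_zero, zero_mul]
  rw [Finset.sum_ite_eq']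
  rcases n with _ | n
  · simp
  · simp [iteratedDeriv_succ']

lemma iteratedDeriv_two_three_of_mul_deriv_eq {D P : ℂ → ℂ} (hD : AnalyticAt ℂ D 0)
    (hP : AnalyticAt ℂ P 0) (heq : (fun z => z * deriv D z) =ᶠ[𝓝 0] fun z => P z * D z)
    (hD0 : D 0 = 0) (hD1 : deriv D 0 = 1) :
    iteratedDeriv 2 D 0 = 2 * deriv P 0 ∧
      2 * iteratedDeriv 3 D 0 = 3 * iteratedDeriv 2 P 0 + 3 * deriv P 0 * iteratedDeriv 2 D 0 := by
  have h1 := iteratedDeriv_leibniz_of_mul_deriv_eq hD hP heq 1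
  have h2 := iteratedDeriv_leibniz_of_mul_deriv_eq hD hP heq 2
  have h3 := iteratedDeriv_leibniz_of_mul_deriv_eq hD hP heq 3
  simp only [Finset.sum_range_succ, Finset.sum_range_zero, iteratedDeriv_zero, iteratedDeriv_one]
    at h1 h2 h3
  norm_num at h1 h2 h3
  have hP0 : P 0 = 1 := by linear_combination -h1 + (1 - P 0) * hD1 - deriv P 0 * hD0
  constructor
  · linear_combination h2 + iteratedDeriv 2 D 0 * hP0 + 2 * deriv P 0 * hD1
      + iteratedDeriv 2 P 0 * hD0
  · linear_combination h3 + iteratedDeriv 3 D 0 * hP0 + 3 * iteratedDeriv 2 P 0 * hD1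
      + iteratedDeriv 3 P 0 * hD0

lemma iteratedDeriv_two_comp {φ u : ℂ → ℂ} {x : ℂ} (hφ : AnalyticAt ℂ φ (u x))
    (hu : AnalyticAt ℂ u x) :
    iteratedDeriv 2 (φ ∘ u) x =
      iteratedDeriv 2 φ (u x) * deriv u x ^ 2 + deriv φ (u x) * iteratedDeriv 2 u x := by
  have hφ' : ∀ᶠ z in 𝓝 x, AnalyticAt ℂ φ (u z) :=
    hu.continuousAt.eventually hφ.eventually_analyticAt
  have hchain : deriv (φ ∘ u) =ᶠ[𝓝 x] fun z => deriv φ (u z) * deriv u z := by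
    filter_upwards [hφ', hu.eventually_analyticAt] with z hφz huz
    exact deriv_comp z hφz.differentiableAt huz.differentiableAt
  have hφu : HasDerivAt (fun z => deriv φ (u z)) (deriv (deriv φ) (u x) * deriv u x) x :=
    hφ.deriv.differentiableAt.hasDerivAt.comp x hu.differentiableAt.hasDerivAt
  rw [iteratedDeriv_succ, iteratedDeriv_one, hchain.deriv_eq,
    deriv_fun_mul hφu.differentiableAt hu.deriv.differentiableAt, hφu.deriv]
  simp only [iteratedDeriv_succ, iteratedDeriv_zero]
  ring

open ComplexConjugate in
lemma norm_mobius_le_one {a b : ℂ} (ha : ‖a‖ ≤ 1) (hb : ‖b‖ < 1) :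
    1 - conj b * a ≠ 0 ∧ ‖(a - b) / (1 - conj b * a)‖ ≤ 1 := by
  have hba : ‖conj b * a‖ < 1 := by
    rw [norm_mul, Complex.norm_conj]
    nlinarith [norm_nonneg a, norm_nonneg b]
  have hden : 1 - conj b * a ≠ 0 := fun h => by
    rw [← sub_eq_zero.mp h, norm_one] at hba
    exact lt_irrefl _ hba
  have hkey : Complex.normSq (1 - conj b * a) - Complex.normSq (a - b)
      = (1 - Complex.normSq a) * (1 - Complex.normSq b) := by
    simp only [Complex.normSq_apply, Complex.sub_re, Complex.sub_im, Complex.mul_re,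
      Complex.mul_im, Complex.conj_re, Complex.conj_im, Complex.one_re, Complex.one_im]
    ring
  refine ⟨hden, ?_⟩
  rw [norm_div, div_le_one (norm_pos_iff.mpr hden), ← sq_le_sq₀ (norm_nonneg _) (norm_nonneg _),
    ← Complex.normSq_eq_norm_sq, ← Complex.normSq_eq_norm_sq]
  have ha' : Complex.normSq a ≤ 1 := by rw [Complex.normSq_eq_norm_sq]; nlinarith [norm_nonneg a]
  have hb' : Complex.normSq b ≤ 1 := by rw [Complex.normSq_eq_norm_sq]; nlinarith [norm_nonneg b]
  nlinarith [mul_nonneg (sub_nonneg.2 ha') (sub_nonneg.2 hb')]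

open ComplexConjugate in
lemma norm_deriv_le_one_sub_sq_of_norm_lt_one {v : ℂ → ℂ} (hv : DifferentiableOn ℂ v (ball 0 1))
    (hmaps : MapsTo v (ball 0 1) (closedBall 0 1)) (hv0 : ‖v 0‖ < 1) :
    ‖deriv v 0‖ ≤ 1 - ‖v 0‖ ^ 2 := by
  -- Schwarz's lemma for `v` followed by the disc automorphism sending `v 0` to `0`.
  have hmob : ∀ z ∈ ball (0 : ℂ) 1, 1 - conj (v 0) * v z ≠ 0 ∧
      ‖(v z - v 0) / (1 - conj (v 0) * v z)‖ ≤ 1 :=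
    fun z hz => norm_mobius_le_one (mem_closedBall_zero_iff.mp (hmaps hz)) hv0
  set w := fun z => (v z - v 0) / (1 - conj (v 0) * v z)
  have hw : DifferentiableOn ℂ w (ball 0 1) :=
    (hv.sub_const _).div ((differentiableOn_const 1).sub (hv.const_mul _)) fun z hz => (hmob z hz).1
  have hwmaps : MapsTo w (ball 0 1) (closedBall (w 0) 1) := fun z hz => by
    simpa [w] using (hmob z hz).2
  have hschwarz := Complex.norm_deriv_le_one_of_mapsTo_ball hw hwmaps one_pos
  have hv0d : DifferentiableAt ℂ v 0 := hv.differentiableAt (ball_mem_nhds 0 one_pos)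
  have hne := (hmob 0 (mem_ball_self one_pos)).1
  have hden : 1 - conj (v 0) * v 0 = ((1 - ‖v 0‖ ^ 2 : ℝ) : ℂ) := by
    rw [mul_comm, Complex.mul_conj, Complex.normSq_eq_norm_sq]; push_cast; ring
  have hpos : 0 < 1 - ‖v 0‖ ^ 2 := by nlinarith [norm_nonneg (v 0)]
  have hdw : deriv w 0 = deriv v 0 / ((1 - ‖v 0‖ ^ 2 : ℝ) : ℂ) := by
    rw [((hv0d.hasDerivAt.sub_const _).fun_div
      ((hv0d.hasDerivAt.const_mul (conj (v 0))).const_sub 1) hne).deriv, ← hden]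
    field_simp
    ring
  rwa [hdw, norm_div, Complex.norm_real, Real.norm_of_nonneg hpos.le, div_le_one hpos] at hschwarz

lemma norm_deriv_le_one_sub_sq {v : ℂ → ℂ} (hv : DifferentiableOn ℂ v (ball 0 1))
    (hmaps : MapsTo v (ball 0 1) (closedBall 0 1)) : ‖deriv v 0‖ ≤ 1 - ‖v 0‖ ^ 2 := by
  have hv0d : DifferentiableAt ℂ v 0 := hv.differentiableAt (ball_mem_nhds 0 one_pos)
  -- Apply the case `‖v 0‖ < 1` to the contractions `r • v` and let `r → 1`.
  have hscaled : ∀ r ∈ Ioo (0 : ℝ) 1, r * ‖deriv v 0‖ + r ^ 2 * ‖v 0‖ ^ 2 ≤ 1 := by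
    rintro r ⟨hr0, hr1⟩
    have hnorm : ∀ z, ‖(r : ℂ) * v z‖ = r * ‖v z‖ := fun z => by
      rw [norm_mul, Complex.norm_real, Real.norm_of_nonneg hr0.le]
    have hv0 : ‖v 0‖ ≤ 1 := mem_closedBall_zero_iff.mp (hmaps (mem_ball_self one_pos))
    have h := norm_deriv_le_one_sub_sq_of_norm_lt_one (v := fun z => (r : ℂ) * v z)
      (hv.const_mul _)
      (fun z hz => by
        rw [mem_closedBall_zero_iff, hnorm]
        nlinarith [mem_closedBall_zero_iff.mp (hmaps hz), norm_nonneg (v z)])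
      (by rw [hnorm]; nlinarith [norm_nonneg (v 0)])
    rw [deriv_const_mul _ hv0d, hnorm, norm_mul, Complex.norm_real, Real.norm_of_nonneg hr0.le,
      mul_pow] at h
    linarith
  have hlim : Tendsto (fun r : ℝ => r * ‖deriv v 0‖ + r ^ 2 * ‖v 0‖ ^ 2) (𝓝[<] 1)
      (𝓝 (1 * ‖deriv v 0‖ + 1 ^ 2 * ‖v 0‖ ^ 2)) :=
    (Continuous.tendsto (by fun_prop) 1).mono_left nhdsWithin_le_nhds
  have := le_of_tendsto hlim (eventually_of_mem (Ioo_mem_nhdsLT one_pos) hscaled)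
  linarith

lemma norm_iteratedDeriv_two_le {u : ℂ → ℂ} (hu : DifferentiableOn ℂ u (ball 0 1)) (hu0 : u 0 = 0)
    (hmaps : MapsTo u (ball 0 1) (ball 0 1)) :
    ‖iteratedDeriv 2 u 0‖ ≤ 2 * (1 - ‖deriv u 0‖ ^ 2) := by
  have hball : ball (0 : ℂ) 1 ∈ 𝓝 0 := ball_mem_nhds 0 one_pos
  have hmaps' : MapsTo u (ball 0 1) (closedBall (u 0) 1) := by
    rw [hu0]; exact hmaps.mono_right ball_subset_closedBall
  have hslope := norm_deriv_le_one_sub_sq ((differentiableOn_dslope hball).mpr hu)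
    fun z hz => by simpa using Complex.norm_dslope_le_div_of_mapsTo_ball hu hmaps' hz
  have hq := (hu.analyticAt hball).hasFPowerSeriesAt
  have hderiv : deriv (dslope u 0) 0 = iteratedDeriv 2 u 0 / 2 := by
    have hcoeff : deriv (dslope u 0) 0 = (FormalMultilinearSeries.ofScalars ℂ
        fun n => iteratedDeriv n u 0 / n.factorial).fslope.coeff 1 :=
      hq.has_fpower_series_dslope_fslope.deriv
    rw [hcoeff, FormalMultilinearSeries.coeff_fslope, FormalMultilinearSeries.coeff_ofScalars]
    norm_num
  rw [hderiv, dslope_same, norm_div] at hslope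
  norm_num at hslope
  linarith

lemma exists_coeff_relations_of_subord {lam al be d : ℝ} (hd : 0 ≤ d) {B : ℕ → ℝ}
    {φ f : ℂ → ℂ} {a : ℕ → ℂ} (hφ : AnalyticOnNhd ℂ φ unitDisk)
    (hφs : ∀ z ∈ unitDisk, HasSum (fun n => (B n : ℂ) * z ^ n) (φ z)) (hf : IsInA f a)
    (hnz : ∀ z ∈ unitDisk, z ≠ 0 → Dop lam al be d 0 a z ≠ 0)
    (hsub : Subord (bazFun 0 (Dop lam al be d 0 a)) φ) :
    ∃ c₁ c₂ : ℂ, ‖c₂‖ ≤ 1 - ‖c₁‖ ^ 2 ∧ (Cdel d 2 : ℂ) * a 2 = B 1 * c₁ ∧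
      2 * Cdel d 3 * a 3 - (Cdel d 2 : ℂ) ^ 2 * a 2 ^ 2 = B 1 * c₂ + B 2 * c₁ ^ 2 := by
  obtain ⟨r, hr, hDsum⟩ := exists_hasSum_Dop (lam := lam) (al := al) (be := be) hd hf
  set D := Dop lam al be d 0 a
  have hDcoeff := iteratedDeriv_eq_factorial_mul_of_hasSum hr hDsum
  have hφcoeff := iteratedDeriv_eq_factorial_mul_of_hasSum one_pos
    fun z hz => hφs z (mem_unitDisk.2 hz)
  have hD0 : D 0 = 0 := by simpa [hf.2.1] using hDcoeff 0
  have hD1 : deriv D 0 = 1 := by simpa [hf.2.2.1, Cdel_one hd] using hDcoeff 1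
  obtain ⟨u, hu, hu0, hub, hDu⟩ := hsub
  have h0 : (0 : ℂ) ∈ unitDisk := mem_unitDisk.2 (by simp)
  have hmaps : MapsTo u unitDisk unitDisk := fun z hz => mem_unitDisk.2 (hub z hz)
  have hφu : AnalyticAt ℂ φ (u 0) := hφ _ (hmaps h0)
  have heq : (fun z => z * deriv D z) =ᶠ[𝓝 0] fun z => (φ ∘ u) z * D z := by
    filter_upwards [isOpen_ball.mem_nhds h0] with z hz
    rcases eq_or_ne z 0 with rfl | hz0
    · simp [hD0]
    · have h := hDu z hz
      simp only [bazFun, if_neg hz0, Complex.ofReal_zero, Complex.cpow_zero, mul_one] at h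
      rw [Function.comp_apply, ← h, div_mul_cancel₀ _ (hnz z hz hz0)]
  obtain ⟨hD2, hD3⟩ := iteratedDeriv_two_three_of_mul_deriv_eq
    (hasFPowerSeriesOnBall_ofScalars_of_hasSum hr hDsum).analyticAt (hφu.comp (hu 0 h0)) heq hD0 hD1
  have hφ1 : deriv φ 0 = B 1 := by simpa using hφcoeff 1
  have hφ2 : iteratedDeriv 2 φ 0 = 2 * B 2 := by simpa using hφcoeff 2
  have hP1 : deriv (φ ∘ u) 0 = B 1 * deriv u 0 := by
    rw [deriv_comp 0 hφu.differentiableAt (hu 0 h0).differentiableAt, hu0, hφ1]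
  have hP2 := iteratedDeriv_two_comp hφu (hu 0 h0)
  rw [hu0, hφ1, hφ2] at hP2
  rw [hDcoeff, hP1] at hD2
  rw [hDcoeff, hDcoeff, hP1, hP2] at hD3
  refine ⟨deriv u 0, iteratedDeriv 2 u 0 / 2, ?_, ?_, ?_⟩
  · have := norm_iteratedDeriv_two_le hu.differentiableOn hu0 hmaps
    rw [norm_div, Complex.norm_ofNat]
    linarith
  · simpa using hD2
  · norm_num at hD2 hD3
    linear_combination hD3 / 6 - Cdel d 2 * a 2 * hD2

section CoefficientBounds

variable {H K b₁ b₂ : ℝ} {a₂ a₃ c₁ c₂ d₁ d₂ : ℂ}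

lemma norm_le_one_of_norm_le_one_sub_sq (h : ‖c₂‖ ≤ 1 - ‖c₁‖ ^ 2) : ‖c₁‖ ≤ 1 := by
  nlinarith [norm_nonneg c₁, norm_nonneg c₂]

lemma mul_norm_eq_of_coeff_relation (hH : 0 < H) (hb₁ : 0 < b₁) (e₁ : H * a₂ = b₁ * c₁) :
    H * ‖a₂‖ = b₁ * ‖c₁‖ := by
  simpa [norm_mul, Complex.norm_real, abs_of_pos hH, abs_of_pos hb₁] using congrArg norm e₁

lemma sq_norm_mul_abs_le_of_coeff_relations (hH : 0 < H) (hb₁ : 0 < b₁)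
    (hc : ‖c₂‖ ≤ 1 - ‖c₁‖ ^ 2) (hd : ‖d₂‖ ≤ 1 - ‖d₁‖ ^ 2)
    (e₁ : H * a₂ = b₁ * c₁) (e₂ : 2 * K * a₃ - H ^ 2 * a₂ ^ 2 = b₁ * c₂ + b₂ * c₁ ^ 2)
    (f₁ : H * -a₂ = b₁ * d₁)
    (f₂ : 2 * K * (2 * a₂ ^ 2 - a₃) - H ^ 2 * (-a₂) ^ 2 = b₁ * d₂ + b₂ * d₁ ^ 2) :
    ‖a₂‖ ^ 2 * |b₁ ^ 2 * (2 * K - H ^ 2) - (b₂ - b₁) * H ^ 2| ≤ b₁ ^ 3 := by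
  have hb₁' : (b₁ : ℂ) ≠ 0 := Complex.ofReal_ne_zero.mpr hb₁.ne'
  obtain rfl : d₁ = -c₁ := mul_left_cancel₀ hb₁' (by linear_combination -f₁ - e₁)
  set X := (4 * K - 2 * H ^ 2) * b₁ ^ 2 - 2 * b₂ * H ^ 2 with hX
  -- Adding the two relations eliminates `a₃`; `c₁ = H a₂ / b₁` then eliminates `c₁`.
  have hsum : a₂ ^ 2 * X = b₁ ^ 3 * (c₂ + d₂) := by
    push_cast [X]
    linear_combination b₁ ^ 2 * e₂ + b₁ ^ 2 * f₂ - 2 * b₂ * (b₁ * c₁ + H * a₂) * e₁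
  have hsum' : ‖a₂‖ ^ 2 * |X| = b₁ ^ 3 * ‖c₂ + d₂‖ := by
    simpa [norm_mul, Complex.norm_real, abs_of_pos hb₁] using congrArg norm hsum
  have hcd : ‖c₂ + d₂‖ ≤ 2 - 2 * ‖c₁‖ ^ 2 := by
    rw [norm_neg] at hd
    linarith [norm_add_le c₂ d₂]
  have habs : 2 * |b₁ ^ 2 * (2 * K - H ^ 2) - (b₂ - b₁) * H ^ 2| ≤ |X| + 2 * b₁ * H ^ 2 := by
    calc 2 * |b₁ ^ 2 * (2 * K - H ^ 2) - (b₂ - b₁) * H ^ 2|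
        = |2 * (b₁ ^ 2 * (2 * K - H ^ 2) - (b₂ - b₁) * H ^ 2)| := by rw [abs_mul, abs_two]
      _ = |X + 2 * b₁ * H ^ 2| := by rw [hX]; ring_nf
      _ ≤ |X| + |2 * b₁ * H ^ 2| := abs_add_le _ _
      _ = |X| + 2 * b₁ * H ^ 2 := by rw [abs_of_pos (by positivity : (0 : ℝ) < 2 * b₁ * H ^ 2)]
  have hc₁sq : b₁ * H ^ 2 * ‖a₂‖ ^ 2 = b₁ ^ 3 * ‖c₁‖ ^ 2 := by
    linear_combination b₁ * (H * ‖a₂‖ + b₁ * ‖c₁‖) * mul_norm_eq_of_coeff_relation hH hb₁ e₁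
  nlinarith [mul_le_mul_of_nonneg_left habs (sq_nonneg ‖a₂‖),
    mul_le_mul_of_nonneg_left hcd (pow_nonneg hb₁.le 3)]

lemma norm_le_div_of_coeff_relation (hH : 0 < H) (hb₁ : 0 < b₁) (hc : ‖c₂‖ ≤ 1 - ‖c₁‖ ^ 2)
    (e₁ : H * a₂ = b₁ * c₁) : ‖a₂‖ ≤ b₁ / H := by
  rw [le_div_iff₀ hH]
  nlinarith [mul_norm_eq_of_coeff_relation hH hb₁ e₁, norm_le_one_of_norm_le_one_sub_sq hc]

lemma norm_sub_sq_le_of_coeff_relations (hK : 0 < K) (hb₁ : 0 < b₁)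
    (hc : ‖c₂‖ ≤ 1 - ‖c₁‖ ^ 2) (hd : ‖d₂‖ ≤ 1 - ‖d₁‖ ^ 2)
    (e₁ : H * a₂ = b₁ * c₁) (e₂ : 2 * K * a₃ - H ^ 2 * a₂ ^ 2 = b₁ * c₂ + b₂ * c₁ ^ 2)
    (f₁ : H * -a₂ = b₁ * d₁)
    (f₂ : 2 * K * (2 * a₂ ^ 2 - a₃) - H ^ 2 * (-a₂) ^ 2 = b₁ * d₂ + b₂ * d₁ ^ 2) :
    ‖a₃ - a₂ ^ 2‖ ≤ b₁ / (2 * K) := by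
  have hb₁' : (b₁ : ℂ) ≠ 0 := Complex.ofReal_ne_zero.mpr hb₁.ne'
  obtain rfl : d₁ = -c₁ := mul_left_cancel₀ hb₁' (by linear_combination -f₁ - e₁)
  have hdiff : 4 * K * (a₃ - a₂ ^ 2) = b₁ * (c₂ - d₂) := by linear_combination e₂ - f₂
  have hdiff' : 4 * K * ‖a₃ - a₂ ^ 2‖ = b₁ * ‖c₂ - d₂‖ := by
    simpa [norm_mul, Complex.norm_real, abs_of_pos hK, abs_of_pos hb₁, mul_assoc]
      using congrArg norm hdiff
  rw [norm_neg] at hd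
  rw [le_div_iff₀ (by positivity)]
  nlinarith [norm_nonneg c₁, mul_le_mul_of_nonneg_left (norm_sub_le c₂ d₂) hb₁.le]

end CoefficientBounds

lemma le_mul_sqrt_div_sqrt_of_sq_mul_le {x b D : ℝ} (hb : 0 ≤ b) (hD : D ≠ 0)
    (h : x ^ 2 * |D| ≤ b ^ 3) : x ≤ b * √b / √|D| :=
  calc x ≤ √(x ^ 2) := by rw [Real.sqrt_sq_eq_abs]; exact le_abs_self x
    _ ≤ √(b ^ 3 / |D|) := Real.sqrt_le_sqrt (by rwa [le_div_iff₀ (abs_pos.mpr hD)])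
    _ = b * √b / √|D| := by
      rw [Real.sqrt_div' _ (abs_nonneg D), pow_succ, Real.sqrt_mul (sq_nonneg b), Real.sqrt_sq hb]

theorem cor_2_4_general (α β lam δ : ℝ)
    (hδ : 0 ≤ δ)
    (B : ℕ → ℝ) (φ : ℂ → ℂ)
    (hφ : AnalyticOnNhd ℂ φ unitDisk)
    (hφs : ∀ z ∈ unitDisk, HasSum (fun n => (B n : ℂ) * z ^ n) (φ z))
    (hB1 : 0 < B 1)
    (f g : ℂ → ℂ) (a b : ℕ → ℂ)
    (hmem : MemB lam α β δ 0 0 φ f g a b)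
    (hden : B 1 ^ 2 * (2 * Cdel δ 3 - Cdel δ 2 ^ 2) - (B 2 - B 1) * Cdel δ 2 ^ 2 ≠ 0) :
    ‖a 2‖ ≤ B 1 * Real.sqrt (B 1) /
      Real.sqrt |B 1 ^ 2 * (2 * Cdel δ 3 - Cdel δ 2 ^ 2) - (B 2 - B 1) * Cdel δ 2 ^ 2| ∧
    ‖a 3‖ ≤ B 1 / (2 * Cdel δ 3) + (B 1 / Cdel δ 2) ^ 2 := by
  obtain ⟨hfA, -, hgA, -, -, hb2, hb3, hnza, hnzb, hsuba, hsubb⟩ := hmem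
  obtain ⟨c₁, c₂, hc, e₁, e₂⟩ := exists_coeff_relations_of_subord hδ hφ hφs hfA hnza hsuba
  obtain ⟨d₁, d₂, hd, f₁, f₂⟩ := exists_coeff_relations_of_subord hδ hφ hφs hgA hnzb hsubb
  rw [hb2] at f₁
  rw [hb2, hb3] at f₂
  have hH : 0 < Cdel δ 2 := Cdel_pos hδ (by norm_num)
  have hK : 0 < Cdel δ 3 := Cdel_pos hδ (by norm_num)
  refine ⟨le_mul_sqrt_div_sqrt_of_sq_mul_le hB1.le hden
    (sq_norm_mul_abs_le_of_coeff_relations hH hB1 hc hd e₁ e₂ f₁ f₂), ?_⟩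
  calc ‖a 3‖ ≤ ‖a 3 - a 2 ^ 2‖ + ‖a 2‖ ^ 2 := by
        rw [← norm_pow]
        exact norm_le_norm_sub_add _ _
    _ ≤ B 1 / (2 * Cdel δ 3) + (B 1 / Cdel δ 2) ^ 2 := by
        gcongr
        · exact norm_sub_sq_le_of_coeff_relations hK hB1 hc hd e₁ e₂ f₁ f₂
        · exact norm_le_div_of_coeff_relation hH hB1 hc e₁

theorem cor_2_4 (α β lam δ : ℝ)
    (hα0 : 0 < α) (hα1 : α ≤ 1) (hβ0 : 0 < β) (hβ1 : β ≤ 1)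
    (hlam : 0 ≤ lam) (hδ : 0 ≤ δ)
    (B : ℕ → ℝ) (φ : ℂ → ℂ)
    (hφ : AnalyticOnNhd ℂ φ unitDisk)
    (hφs : ∀ z ∈ unitDisk, HasSum (fun n => (B n : ℂ) * z ^ n) (φ z))
    (hB0 : B 0 = 1) (hB1 : 0 < B 1)
    (f g : ℂ → ℂ) (a b : ℕ → ℂ)
    (hmem : MemB lam α β δ 0 0 φ f g a b)
    (hden : B 1 ^ 2 * (2 * Cdel δ 3 - Cdel δ 2 ^ 2) - (B 2 - B 1) * Cdel δ 2 ^ 2 ≠ 0) :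
    ‖a 2‖ ≤ B 1 * Real.sqrt (B 1) /
      Real.sqrt |B 1 ^ 2 * (2 * Cdel δ 3 - Cdel δ 2 ^ 2) - (B 2 - B 1) * Cdel δ 2 ^ 2| ∧
    ‖a 3‖ ≤ B 1 / (2 * Cdel δ 3) + (B 1 / Cdel δ 2) ^ 2 :=
  cor_2_4_general α β lam δ hδ B φ hφ hφs hB1 f g a b hmem hden
end
end

section
/- (Corollary 3.17) Suppose k = 0 and δ = 0 (so Υₙ = 1 and C(δ,n) = 1 for all n, and Df = f, Dg = g). Let 0 ≤ ζ < 1 and let f(z) = z + Σ_{n≥2} aₙ zⁿ belong to the class B_Σ(0, ζ). Then |a₂| ≤ √(2(1−ζ)) and |a₃| ≤ (1−ζ) + 4(1−ζ)². -/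
open Complex

noncomputable section

/-
With `k = δ = 0` the operator `D` is the identity, so for `f` the subordination says that
`H = z f' / f` equals `φ ∘ u` for a Schwarz function `u`; in particular `Re H ≥ ζ` on the disk.
Comparing Taylor coefficients in `H f = z f'` gives `H'(0) = a₂` and `H''(0) / 2 = 2 a₃ - a₂²`,
and Carathéodory's lemma bounds both by `2 (1 - ζ)`. For the inverse `g`, with coefficients
`-a₂` and `2 a₂² - a₃`, the same argument bounds `|3 a₂² - 2 a₃|` by `2 (1 - ζ)`; adding and
subtracting the two second-order bounds gives the estimates for `|a₂|²` and `|a₃|`.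

Carathéodory's lemma: the `n`-th Taylor coefficient of `p` is the circle average of `z⁻ⁿ p` over
`|z| = r`. The average of `z⁻ⁿ p̄` vanishes, so the coefficient is also the average of
`z⁻ⁿ · 2 Re p`, whose modulus is at most `r⁻ⁿ` times the average of `2 Re p`, i.e. `2 Re p(0)`.
-/

open Metric Filter Topology Real
open scoped Nat ComplexConjugate

theorem norm_circleAverage_le {E : Type*} [NormedAddCommGroup E] [NormedSpace ℝ E]
    (f : ℂ → E) (c : ℂ) (R : ℝ) :
    ‖circleAverage f c R‖ ≤ circleAverage (fun z => ‖f z‖) c R := by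
  rw [circleAverage_def, circleAverage_def, norm_smul, smul_eq_mul,
    Real.norm_of_nonneg (by positivity)]
  gcongr
  exact intervalIntegral.norm_integral_le_integral_norm two_pi_pos.le

section Caratheodory

variable {p : ℂ → ℂ} {r : ℝ}

theorem iteratedDeriv_div_factorial_eq_circleAverage (hr : 0 < r)
    (hp : DifferentiableOn ℂ p (closedBall 0 r)) (n : ℕ) :
    iteratedDeriv n p 0 / n ! = circleAverage (fun z => (z ^ n)⁻¹ * p z) 0 r := by
  have hcauchy := hp.circleIntegral_one_div_sub_center_pow_smul hr n
  have hinteg : (fun z => (z - 0)⁻¹ • ((z ^ n)⁻¹ * p z))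
      = fun z => (1 / (z - 0) ^ (n + 1)) • p z := by
    ext z
    simp only [sub_zero, smul_eq_mul, one_div, pow_succ, mul_inv]
    ring
  rw [circleAverage_eq_circleIntegral hr.ne', hinteg, hcauchy, smul_smul, smul_eq_mul]
  field_simp

theorem circleAverage_inv_pow_mul_conj_eq_zero (hr : 0 < r)
    (hp : DifferentiableOn ℂ p (closedBall 0 r)) {n : ℕ} (hn : n ≠ 0) :
    circleAverage (fun z => (z ^ n)⁻¹ * conj (p z)) 0 r = 0 := by
  have hq : DifferentiableOn ℂ (fun z => z ^ n * p z) (closedBall 0 r) :=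
    (differentiableOn_pow n).mul hp
  have hmean : circleAverage (fun z => z ^ n * p z) 0 r = 0 := by
    rw [(hq.diffContOnCl_ball (by rw [abs_of_pos hr])).circleAverage]
    simp [hn]
  have hsphere : Set.EqOn (fun z => (z ^ n)⁻¹ * conj (p z))
      (fun z => ((r ^ (2 * n))⁻¹ : ℝ) • conj (z ^ n * p z)) (sphere 0 |r|) := by
    intro z hz
    rw [abs_of_pos hr, mem_sphere_zero_iff_norm] at hz
    have hz0 : z ≠ 0 := norm_pos_iff.mp (hz ▸ hr)
    have hconj : conj z = (r ^ 2 : ℝ) * z⁻¹ := by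
      rw [← hz, Complex.ofReal_pow, ← Complex.mul_conj']
      field_simp
    have hr0 : (r : ℂ) ≠ 0 := Complex.ofReal_ne_zero.mpr hr.ne'
    simp only [map_mul, map_pow, hconj, Complex.real_smul]
    push_cast
    rw [mul_pow, ← pow_mul, inv_pow]
    field_simp
  rw [circleAverage_congr_sphere hsphere, circleAverage_fun_smul]
  have hcomm := (Complex.conjCLE.toContinuousLinearMap).circleAverage_comp_comm
    (hq.continuousOn.mono sphere_subset_closedBall |>.circleIntegrable hr.le)
  simp only [Function.comp_def, ContinuousLinearEquiv.coe_coe, Complex.conjCLE_apply] at hcomm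
  rw [hcomm, hmean, map_zero, smul_zero]

theorem norm_iteratedDeriv_div_factorial_mul_pow_le (hr : 0 < r)
    (hp : DifferentiableOn ℂ p (closedBall 0 r)) (hre : ∀ z ∈ sphere (0 : ℂ) r, 0 ≤ (p z).re)
    {n : ℕ} (hn : n ≠ 0) :
    ‖iteratedDeriv n p 0 / (n ! : ℂ)‖ * r ^ n ≤ 2 * (p 0).re := by
  have hpc : ContinuousOn p (closedBall 0 r) := hp.continuousOn
  have hinv : ContinuousOn (fun z : ℂ => (z ^ n)⁻¹) (sphere 0 |r|) :=
    (continuousOn_pow n).inv₀ fun z hz =>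
      pow_ne_zero _ (ne_of_mem_sphere hz (abs_pos.mpr hr.ne').ne')
  have hint₁ : CircleIntegrable (fun z => (z ^ n)⁻¹ * p z) 0 r :=
    (hpc.mono sphere_subset_closedBall |>.circleIntegrable hr.le).continuousOn_mul hinv
  have hint₂ : CircleIntegrable (fun z => (z ^ n)⁻¹ * conj (p z)) 0 r :=
    ((Complex.continuous_conj.comp_continuousOn (hpc.mono sphere_subset_closedBall))
      |>.circleIntegrable hr.le).continuousOn_mul hinv
  have hcoeff : iteratedDeriv n p 0 / n !
      = circleAverage (fun z => (z ^ n)⁻¹ * (2 * (p z).re : ℝ)) 0 r := by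
    have hsum := circleAverage_fun_add hint₁ hint₂
    rw [circleAverage_inv_pow_mul_conj_eq_zero hr hp hn, add_zero] at hsum
    rw [iteratedDeriv_div_factorial_eq_circleAverage hr hp, ← hsum]
    congr 1
    ext z
    rw [← mul_add, Complex.add_conj]
  have hmean_re : circleAverage (fun z => (p z).re) 0 r = (p 0).re := by
    have := Complex.reCLM.circleAverage_comp_comm
      (hpc.mono sphere_subset_closedBall |>.circleIntegrable hr.le)
    rw [Function.comp_def] at this
    simp only [Complex.reCLM_apply] at this
    rw [this, (hp.diffContOnCl_ball (by rw [abs_of_pos hr])).circleAverage]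
  have hnorm : circleAverage (fun z => ‖(z ^ n)⁻¹ * ((2 * (p z).re : ℝ) : ℂ)‖) 0 r
      = (r ^ n)⁻¹ * (2 * (p 0).re) := by
    have hsphere : Set.EqOn (fun z => ‖(z ^ n)⁻¹ * ((2 * (p z).re : ℝ) : ℂ)‖)
        (fun z => ((r ^ n)⁻¹ * 2) • (p z).re) (sphere 0 |r|) := by
      intro z hz
      rw [abs_of_pos hr] at hz
      have hre_z := hre z hz
      dsimp only
      rw [norm_mul, norm_inv, norm_pow, mem_sphere_zero_iff_norm.mp hz, Complex.norm_real,
        Real.norm_of_nonneg (by linarith), smul_eq_mul]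
      ring
    rw [circleAverage_congr_sphere hsphere, circleAverage_fun_smul, hmean_re, smul_eq_mul]
    ring
  calc ‖iteratedDeriv n p 0 / (n ! : ℂ)‖ * r ^ n
      ≤ circleAverage (fun z => ‖(z ^ n)⁻¹ * ((2 * (p z).re : ℝ) : ℂ)‖) 0 r * r ^ n := by
        rw [hcoeff]
        gcongr
        exact norm_circleAverage_le _ _ _
    _ = 2 * (p 0).re := by
        rw [hnorm]
        field_simp

theorem norm_iteratedDeriv_le_of_le_re (hp : DifferentiableOn ℂ p (ball 0 1)) {ζ : ℝ}
    (hre : ∀ z ∈ ball (0 : ℂ) 1, ζ ≤ (p z).re) {n : ℕ} (hn : n ≠ 0) :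
    ‖iteratedDeriv n p 0‖ ≤ n ! * (2 * ((p 0).re - ζ)) := by
  have hbound : ∀ r ∈ Set.Ioo (0 : ℝ) 1,
      ‖iteratedDeriv n p 0‖ / n ! * r ^ n ≤ 2 * ((p 0).re - ζ) := by
    rintro r ⟨hr0, hr1⟩
    have hsub : closedBall (0 : ℂ) r ⊆ ball 0 1 := closedBall_subset_ball hr1
    have := norm_iteratedDeriv_div_factorial_mul_pow_le (p := fun z => (-ζ : ℂ) + p z) hr0
      (((differentiableOn_const _).add hp).mono hsub)
      (fun z hz => by simpa using hre z (hsub (sphere_subset_closedBall hz))) hn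
    simpa [iteratedDeriv_const_add (Nat.pos_of_ne_zero hn), sub_eq_neg_add] using this
  have hlim : Tendsto (fun r : ℝ => ‖iteratedDeriv n p 0‖ / n ! * r ^ n) (𝓝[<] 1)
      (𝓝 (‖iteratedDeriv n p 0‖ / n !)) := by
    have hpow : Tendsto (fun r : ℝ => r ^ n) (𝓝[<] 1) (𝓝 1) :=
      ((continuous_pow n).tendsto' 1 1 (one_pow n)).mono_left nhdsWithin_le_nhds
    simpa using tendsto_const_nhds.mul hpow
  have hc := le_of_tendsto hlim (eventually_of_mem (Ioo_mem_nhdsLT zero_lt_one) hbound)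
  rw [div_le_iff₀ (by positivity)] at hc
  linarith

end Caratheodory

theorem sum_choose_mul_iteratedDeriv_eq {f H : ℂ → ℂ} (hf : AnalyticAt ℂ f 0)
    (hH : AnalyticAt ℂ H 0) (h : ∀ᶠ z in 𝓝 0, H z * f z = z * deriv f z) (n : ℕ) :
    ∑ i ∈ Finset.range (n + 1), n.choose i * iteratedDeriv i H 0 * iteratedDeriv (n - i) f 0
      = n * iteratedDeriv n f 0 := by
  rw [← iteratedDeriv_fun_mul hH.contDiffAt hf.contDiffAt, Filter.EventuallyEq.iteratedDeriv_eq n h,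
    iteratedDeriv_fun_mul (f := fun z => z) contDiffAt_id hf.deriv.contDiffAt]
  cases n with
  | zero => simp
  | succ m =>
    rw [Finset.sum_eq_single 1]
    · simp [iteratedDeriv_succ']
    · intro i _ hi
      simp [iteratedDeriv_fun_id_zero, hi]
    · simp

theorem le_re_one_add_mul_div_one_sub {ζ : ℝ} (hζ : ζ ≤ 1) {w : ℂ} (hw : ‖w‖ < 1) :
    ζ ≤ ((1 + (1 - 2 * (ζ : ℂ)) * w) / (1 - w)).re := by
  have hw1 : 1 - w ≠ 0 := sub_ne_zero.mpr fun h => by simp [← h] at hw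
  have hcayley : 0 ≤ ((1 + w) / (1 - w)).re := by
    rw [Complex.div_re, ← add_div]
    apply div_nonneg _ (Complex.normSq_nonneg _)
    have : Complex.normSq w < 1 := by
      rw [Complex.normSq_eq_norm_sq]; nlinarith [norm_nonneg w]
    simp only [Complex.add_re, Complex.sub_re, Complex.add_im, Complex.sub_im, Complex.one_re,
      Complex.one_im, Complex.normSq_apply] at this ⊢
    nlinarith
  have hsplit : (1 + (1 - 2 * (ζ : ℂ)) * w) / (1 - w)
      = ζ + ((1 - ζ : ℝ) : ℂ) * ((1 + w) / (1 - w)) := by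
    field_simp
    push_cast
    ring
  rw [hsplit, Complex.add_re, Complex.ofReal_re, Complex.re_ofReal_mul]
  have := mul_nonneg (sub_nonneg.mpr hζ) hcayley
  linarith

theorem norm_sq_le_of_norm_two_mul_sub_sq_le {x y : ℂ} {B : ℝ} (h₁ : ‖2 * y - x ^ 2‖ ≤ B)
    (h₂ : ‖3 * x ^ 2 - 2 * y‖ ≤ B) : ‖x‖ ^ 2 ≤ B := by
  have h : ‖2 * x ^ 2‖ ≤ 2 * B := calc
    ‖2 * x ^ 2‖ = ‖(2 * y - x ^ 2) + (3 * x ^ 2 - 2 * y)‖ := by ring_nf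
    _ ≤ 2 * B := by linarith [norm_add_le (2 * y - x ^ 2) (3 * x ^ 2 - 2 * y)]
  rw [norm_mul, norm_pow, Complex.norm_two] at h
  linarith

theorem norm_le_norm_sq_add_of_norm_two_mul_sub_sq_le {x y : ℂ} {B : ℝ}
    (h₁ : ‖2 * y - x ^ 2‖ ≤ B) (h₂ : ‖3 * x ^ 2 - 2 * y‖ ≤ B) : ‖y‖ ≤ ‖x‖ ^ 2 + B / 2 := by
  have h : ‖4 * y‖ ≤ 4 * ‖x‖ ^ 2 + 2 * B := calc
    ‖4 * y‖ = ‖4 * x ^ 2 + ((2 * y - x ^ 2) - (3 * x ^ 2 - 2 * y))‖ := by ring_nf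
    _ ≤ ‖4 * x ^ 2‖ + (‖2 * y - x ^ 2‖ + ‖3 * x ^ 2 - 2 * y‖) :=
      (norm_add_le _ _).trans (add_le_add_right (norm_sub_le _ _) _)
    _ ≤ 4 * ‖x‖ ^ 2 + 2 * B := by
      rw [norm_mul, norm_pow, Complex.norm_ofNat]
      linarith
  rw [norm_mul, Complex.norm_ofNat] at h
  linarith

theorem Cdel_zero {n : ℕ} (hn : n ≠ 0) : Cdel 0 n = 1 := by
  have hΓ : Real.Gamma n ≠ 0 := (Real.Gamma_pos_of_pos (by positivity)).ne'
  simp [Cdel, hΓ]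

namespace IsInA

variable {f : ℂ → ℂ} {a : ℕ → ℂ}

theorem hasFPowerSeriesOnBall (hf : IsInA f a) :
    HasFPowerSeriesOnBall f (FormalMultilinearSeries.ofScalars ℂ a) 0 1 where
  r_le := by
    refine ENNReal.le_of_forall_nnreal_lt fun r hr => ?_
    have hr : (r : ℂ) ∈ unitDisk := by simpa [unitDisk] using hr
    refine FormalMultilinearSeries.le_radius_of_tendsto _ (l := 0) ?_
    simpa [FormalMultilinearSeries.ofScalars_norm, norm_mul] using
      (hf.2.2.2 _ hr).summable.tendsto_atTop_zero.norm
  r_pos := one_pos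
  hasSum {y} hy := by
    have hy : y ∈ unitDisk := by
      rwa [← ENNReal.coe_one, Metric.eball_coe, NNReal.coe_one] at hy
    simpa [FormalMultilinearSeries.ofScalars_apply_eq, mul_comm] using hf.2.2.2 y hy

theorem iteratedDeriv_eq (hf : IsInA f a) (n : ℕ) : iteratedDeriv n f 0 = n ! * a n := by
  rw [iteratedDeriv_eq_iteratedFDeriv, ← hf.hasFPowerSeriesOnBall.factorial_smul,
    FormalMultilinearSeries.ofScalars_apply_eq, nsmul_eq_mul]
  simp

theorem Dop_eq (hf : IsInA f a) (lam al be : ℝ) {z : ℂ} (hz : z ∈ unitDisk) :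
    Dop lam al be 0 0 a z = f z := by
  have hterm : (fun n : ℕ => if 2 ≤ n then (Ups lam al be 0 n : ℂ) * (Cdel 0 n : ℂ) * a n * z ^ n
      else 0) = fun n => a n * z ^ n - if n = 1 then z else 0 := by
    funext n
    rcases (show n = 0 ∨ n = 1 ∨ 2 ≤ n by omega) with rfl | rfl | hn
    · simp [hf.2.1]
    · simp [hf.2.2.1]
    · simp [hn, Ups, Cdel_zero (show n ≠ 0 by omega), show n ≠ 1 by omega]
  rw [Dop, hterm, ((hf.2.2.2 z hz).sub (hasSum_ite_eq 1 z)).tsum_eq]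
  ring

theorem coeff_eq_of_mul_eq_mul_deriv {H : ℂ → ℂ} (hf : IsInA f a)
    (hH : AnalyticAt ℂ H 0) (h : ∀ᶠ z in 𝓝 0, H z * f z = z * deriv f z) :
    H 0 = 1 ∧ deriv H 0 = a 2 ∧ iteratedDeriv 2 H 0 = 2 * (2 * a 3 - a 2 ^ 2) := by
  have hf0 : AnalyticAt ℂ f 0 := hf.1 0 (mem_ball_self one_pos)
  have e₁ := sum_choose_mul_iteratedDeriv_eq hf0 hH h 1
  have e₂ := sum_choose_mul_iteratedDeriv_eq hf0 hH h 2
  have e₃ := sum_choose_mul_iteratedDeriv_eq hf0 hH h 3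
  simp only [Finset.sum_range_succ, Finset.sum_range_zero, hf.iteratedDeriv_eq, hf.2.1,
    hf.2.2.1] at e₁ e₂ e₃
  norm_num [Nat.choose, Nat.factorial] at e₁ e₂ e₃
  rw [e₁] at e₂ e₃
  have hH₁ : deriv H 0 = a 2 := by linear_combination e₂ / 2
  rw [hH₁] at e₃
  exact ⟨e₁, hH₁, by linear_combination e₃ / 3⟩

theorem mul_eq_mul_deriv_of_eqOn_bazFun {H : ℂ → ℂ} (hf : IsInA f a) {lam al be : ℝ}
    (hnv : ∀ z ∈ unitDisk, z ≠ 0 → Dop lam al be 0 0 a z ≠ 0)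
    (hH : Set.EqOn (bazFun 0 (Dop lam al be 0 0 a)) H unitDisk) :
    Set.EqOn (fun z => H z * f z) (fun z => z * deriv f z) unitDisk := by
  intro z hz
  dsimp only
  have hDop : Dop lam al be 0 0 a =ᶠ[𝓝 z] f :=
    eventually_of_mem (isOpen_ball.mem_nhds hz) fun w hw => hf.Dop_eq lam al be hw
  by_cases hz0 : z = 0
  · have hf0 : f 0 = 0 := by simpa [hf.2.1] using hf.iteratedDeriv_eq 0
    simp [hz0, hf0]
  · have hfz : f z ≠ 0 := hDop.eq_of_nhds ▸ hnv z hz hz0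
    rw [← hH hz]
    simp only [bazFun, if_neg hz0, Complex.ofReal_zero, Complex.cpow_zero, mul_one,
      hDop.deriv_eq, hDop.eq_of_nhds]
    field_simp

theorem norm_coeff_le_of_subord (hf : IsInA f a) {lam al be ζ : ℝ} (hζ : ζ ≤ 1)
    (hnv : ∀ z ∈ unitDisk, z ≠ 0 → Dop lam al be 0 0 a z ≠ 0)
    (hsub : Subord (bazFun 0 (Dop lam al be 0 0 a))
      (fun z => (1 + (1 - 2 * (ζ : ℂ)) * z) / (1 - z))) :
    ‖a 2‖ ≤ 2 * (1 - ζ) ∧ ‖2 * a 3 - a 2 ^ 2‖ ≤ 2 * (1 - ζ) := by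
  obtain ⟨u, hu, -, hu1, hFu⟩ := hsub
  set H : ℂ → ℂ := fun z => (1 + (1 - 2 * (ζ : ℂ)) * u z) / (1 - u z)
  have hHan : AnalyticOnNhd ℂ H unitDisk := by
    refine (analyticOnNhd_const.add (analyticOnNhd_const.mul hu)).div
      (analyticOnNhd_const.sub hu) fun z hz => sub_ne_zero.mpr fun h => ?_
    simpa [← h] using hu1 z hz
  have hHre : ∀ z ∈ unitDisk, ζ ≤ (H z).re := fun z hz =>
    le_re_one_add_mul_div_one_sub hζ (hu1 z hz)
  have hmul := hf.mul_eq_mul_deriv_of_eqOn_bazFun hnv hFu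
  obtain ⟨hH₀, hH₁, hH₂⟩ := hf.coeff_eq_of_mul_eq_mul_deriv (hHan 0 (mem_ball_self one_pos))
    (eventually_of_mem (isOpen_ball.mem_nhds (mem_ball_self one_pos)) hmul)
  have b₁ := norm_iteratedDeriv_le_of_le_re hHan.differentiableOn hHre one_ne_zero
  have b₂ := norm_iteratedDeriv_le_of_le_re hHan.differentiableOn hHre two_ne_zero
  rw [iteratedDeriv_one, hH₁, hH₀] at b₁
  rw [hH₂, hH₀, norm_mul] at b₂
  norm_num at b₁ b₂
  constructor <;> linarith

end IsInA

theorem cor_3_17_general (α β lam : ℝ)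
    (ζ : ℝ) (hζ1 : ζ < 1)
    (f g : ℂ → ℂ) (a b : ℕ → ℂ)
    (hmem : MemB lam α β 0 0 0 (fun z : ℂ => (1 + (1 - 2 * (ζ : ℂ)) * z) / (1 - z)) f g a b) :
    ‖a 2‖ ≤ Real.sqrt (2 * (1 - ζ)) ∧
    ‖a 3‖ ≤ (1 - ζ) + 4 * (1 - ζ) ^ 2 := by
  obtain ⟨hfa, -, hgb, -, -, hb₂, hb₃, hnva, hnvb, hsuba, hsubb⟩ := hmem
  obtain ⟨ha₂, ha⟩ := hfa.norm_coeff_le_of_subord hζ1.le hnva hsuba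
  obtain ⟨-, hb⟩ := hgb.norm_coeff_le_of_subord hζ1.le hnvb hsubb
  have hb' : ‖3 * a 2 ^ 2 - 2 * a 3‖ ≤ 2 * (1 - ζ) := by
    convert hb using 2
    rw [hb₂, hb₃]
    ring
  refine ⟨Real.le_sqrt_of_sq_le (norm_sq_le_of_norm_two_mul_sub_sq_le ha hb'), ?_⟩
  have ha₃ := norm_le_norm_sq_add_of_norm_two_mul_sub_sq_le ha hb'
  have hsq : ‖a 2‖ ^ 2 ≤ (2 * (1 - ζ)) ^ 2 := pow_le_pow_left₀ (norm_nonneg _) ha₂ 2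
  linarith

theorem cor_3_17 (α β lam : ℝ)
    (hα0 : 0 < α) (hα1 : α ≤ 1) (hβ0 : 0 < β) (hβ1 : β ≤ 1)
    (hlam : 0 ≤ lam) 
    (ζ : ℝ) (hζ0 : 0 ≤ ζ) (hζ1 : ζ < 1)
    (f g : ℂ → ℂ) (a b : ℕ → ℂ)
    (hmem : MemB lam α β 0 0 0 (fun z : ℂ => (1 + (1 - 2 * (ζ : ℂ)) * z) / (1 - z)) f g a b) :
    ‖a 2‖ ≤ Real.sqrt (2 * (1 - ζ)) ∧
    ‖a 3‖ ≤ (1 - ζ) + 4 * (1 - ζ) ^ 2 :=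
  cor_3_17_general α β lam ζ hζ1 f g a b hmem
end
end
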